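/- Let L > 0, T > 0, ε ∈ (0,1], let φ : [−L,L] × [0,T] → ℝ be continuous, and let g₁, g₂ : [−L,L] × [0,T] → ℝ be continuous. For i = 1, 2, let ηᵢ be a twice continuously differentiable solution on [−L,L] × [0,T] of (ηᵢ)_tt − (ηᵢ)_xx + ε⁻¹(sin(φ + ε ηᵢ) − sin φ) = gᵢ with boundary conditions (ηᵢ)_x(±L,t) = 0 (or ηᵢ(±L,t) = 0) and initial data ηᵢ(x,0) = u_{0,i}(x), (ηᵢ)_t(x,0) = v_{0,i}(x). Then there exists a constant c depending only on T such that for all t ∈ [0,T]: ∫_{−L}^{L} ((η₂)_t − (η₁)_t)²(x,t) dx + ∫_{−L}^{L} ((η₂ − η₁)² + ((η₂)_x − (η₁)_x)²)(x,t) dx ≤ c ( ∫_{−L}^{L} (v_{0,2} − v_{0,1})² dx + ∫_{−L}^{L} ((u_{0,2} − u_{0,1})² + (u_{0,2}' − u_{0,1}')²) dx + ∫_0^T ∫_{−L}^{L} (g₂ − g₁)²(x,s) dx ds ). -/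

import Mathlib

open Set

/-- Partial derivative in time of a function of (x, t). -/
noncomputable def pdt (f : ℝ → ℝ → ℝ) (x t : ℝ) : ℝ := deriv (fun s => f x s) t

/-- Partial derivative in space of a function of (x, t). -/
noncomputable def pdx (f : ℝ → ℝ → ℝ) (x t : ℝ) : ℝ := deriv (fun y => f y t) x

/-!
The difference `w = η₂ - η₁` solves the forced wave equation `w_tt - w_xx + S = g₂ - g₁` with
`S = ε⁻¹ (sin (φ + ε η₂) - sin (φ + ε η₁))`, and `|S| ≤ |w|` because `sin` is 1-Lipschitz.
Multiplying by `w_t` and integrating by parts in `x`, where the boundary flux `w_x w_t` vanishes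
under either boundary condition, shows that the energy `E = ∫ w_t² + w² + w_x²` satisfies
`E' ≤ 3 E + ∫ (g₂ - g₁)²`; Grönwall's inequality then gives the estimate with `c = exp (3 T)`.
-/

open Function Real

section PartialDerivatives

variable {f g : ℝ → ℝ → ℝ} {x t : ℝ}

theorem hasDerivAt_pdt_fderiv (hf : DifferentiableAt ℝ (uncurry f) (x, t)) :
    HasDerivAt (f x) (fderiv ℝ (uncurry f) (x, t) (0, 1)) t :=
  hf.hasFDerivAt.comp_hasDerivAt t ((hasDerivAt_const t x).prodMk (hasDerivAt_id t))

theorem hasDerivAt_pdx_fderiv (hf : DifferentiableAt ℝ (uncurry f) (x, t)) :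
    HasDerivAt (f · t) (fderiv ℝ (uncurry f) (x, t) (1, 0)) x :=
  hf.hasFDerivAt.comp_hasDerivAt (f := fun y => (y, t)) x
    ((hasDerivAt_id x).prodMk (hasDerivAt_const x t))

theorem pdt_eq_fderiv (hf : DifferentiableAt ℝ (uncurry f) (x, t)) :
    pdt f x t = fderiv ℝ (uncurry f) (x, t) (0, 1) :=
  (hasDerivAt_pdt_fderiv hf).deriv

theorem pdx_eq_fderiv (hf : DifferentiableAt ℝ (uncurry f) (x, t)) :
    pdx f x t = fderiv ℝ (uncurry f) (x, t) (1, 0) :=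
  (hasDerivAt_pdx_fderiv hf).deriv

theorem hasDerivAt_pdt (hf : DifferentiableAt ℝ (uncurry f) (x, t)) :
    HasDerivAt (f x) (pdt f x t) t :=
  pdt_eq_fderiv hf ▸ hasDerivAt_pdt_fderiv hf

theorem hasDerivAt_pdx (hf : DifferentiableAt ℝ (uncurry f) (x, t)) :
    HasDerivAt (f · t) (pdx f x t) x :=
  pdx_eq_fderiv hf ▸ hasDerivAt_pdx_fderiv hf

theorem uncurry_pdt (hf : Differentiable ℝ (uncurry f)) :
    uncurry (pdt f) = fun p => fderiv ℝ (uncurry f) p (0, 1) :=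
  funext fun _ => pdt_eq_fderiv (hf _)

theorem uncurry_pdx (hf : Differentiable ℝ (uncurry f)) :
    uncurry (pdx f) = fun p => fderiv ℝ (uncurry f) p (1, 0) :=
  funext fun _ => pdx_eq_fderiv (hf _)

theorem ContDiff.pdt {m n : WithTop ℕ∞} (hf : ContDiff ℝ n (uncurry f)) (hmn : m + 1 ≤ n) :
    ContDiff ℝ m (uncurry (pdt f)) := by
  rw [uncurry_pdt (hf.differentiable fun h => by simp [h] at hmn)]
  exact (hf.fderiv_right hmn).clm_apply contDiff_const

theorem ContDiff.pdx {m n : WithTop ℕ∞} (hf : ContDiff ℝ n (uncurry f)) (hmn : m + 1 ≤ n) :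
    ContDiff ℝ m (uncurry (pdx f)) := by
  rw [uncurry_pdx (hf.differentiable fun h => by simp [h] at hmn)]
  exact (hf.fderiv_right hmn).clm_apply contDiff_const

theorem pdt_pdx_comm (hf : ContDiff ℝ 2 (uncurry f)) : pdt (pdx f) x t = pdx (pdt f) x t := by
  have hf1 : Differentiable ℝ (uncurry f) := hf.differentiable two_ne_zero
  have hD : Differentiable ℝ (fderiv ℝ (uncurry f)) :=
    (hf.fderiv_right (m := 1) le_rfl).differentiable one_ne_zero
  have key (v : ℝ × ℝ) (p : ℝ × ℝ) : HasFDerivAt (fun q => fderiv ℝ (uncurry f) q v)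
      ((fderiv ℝ (fderiv ℝ (uncurry f)) p).flip v) p :=
    ((ContinuousLinearMap.apply ℝ ℝ v).hasFDerivAt).comp p (hD p).hasFDerivAt
  rw [pdt_eq_fderiv, uncurry_pdx hf1, (key _ _).fderiv, pdx_eq_fderiv, uncurry_pdt hf1,
    (key _ _).fderiv]
  · exact hf.contDiffAt.isSymmSndFDerivAt (by simp) _ _
  · exact (hf.pdt (m := 1) le_rfl).differentiable one_ne_zero _
  · exact (hf.pdx (m := 1) le_rfl).differentiable one_ne_zero _

theorem pdt_sub (hf : Differentiable ℝ (uncurry f)) (hg : Differentiable ℝ (uncurry g)) :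
    pdt (fun x t => f x t - g x t) = fun x t => pdt f x t - pdt g x t :=
  funext₂ fun _ _ => ((hasDerivAt_pdt (hf _)).sub (hasDerivAt_pdt (hg _))).deriv

theorem pdx_sub (hf : Differentiable ℝ (uncurry f)) (hg : Differentiable ℝ (uncurry g)) :
    pdx (fun x t => f x t - g x t) = fun x t => pdx f x t - pdx g x t :=
  funext₂ fun _ _ => ((hasDerivAt_pdx (hf _)).sub (hasDerivAt_pdx (hg _))).deriv

theorem pdt_pdt_sub (hf : ContDiff ℝ 2 (uncurry f)) (hg : ContDiff ℝ 2 (uncurry g)) :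
    pdt (pdt fun x t => f x t - g x t) = fun x t => pdt (pdt f) x t - pdt (pdt g) x t := by
  rw [pdt_sub (hf.differentiable two_ne_zero) (hg.differentiable two_ne_zero)]
  exact pdt_sub ((hf.pdt le_rfl).differentiable one_ne_zero)
    ((hg.pdt le_rfl).differentiable one_ne_zero)

theorem pdx_pdx_sub (hf : ContDiff ℝ 2 (uncurry f)) (hg : ContDiff ℝ 2 (uncurry g)) :
    pdx (pdx fun x t => f x t - g x t) = fun x t => pdx (pdx f) x t - pdx (pdx g) x t := by
  rw [pdx_sub (hf.differentiable two_ne_zero) (hg.differentiable two_ne_zero)]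
  exact pdx_sub ((hf.pdx le_rfl).differentiable one_ne_zero)
    ((hg.pdx le_rfl).differentiable one_ne_zero)

theorem pdt_eq_deriv_of_eqOn {u : ℝ → ℝ} {s : Set ℝ} (h : EqOn (f x) u s) (hs : s ∈ nhds t) :
    pdt f x t = deriv u t :=
  (h.eventuallyEq_of_mem hs).deriv_eq

theorem pdx_eq_deriv_of_eqOn {u : ℝ → ℝ} {s : Set ℝ} (h : EqOn (f · t) u s) (hs : s ∈ nhds x) :
    pdx f x t = deriv u x :=
  (h.eventuallyEq_of_mem hs).deriv_eq

theorem pdt_eq_zero_of_eqOn_Icc {a b : ℝ} (h : ∀ s ∈ Icc a b, f x s = 0) (ht : t ∈ Ioo a b) :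
    pdt f x t = 0 := by
  simpa using pdt_eq_deriv_of_eqOn (u := fun _ => 0) h (Icc_mem_nhds ht.1 ht.2)

end PartialDerivatives

theorem hasDerivAt_intervalIntegral_of_continuous {E : Type*} [NormedAddCommGroup E]
    [NormedSpace ℝ E] {f f' : ℝ → ℝ → E} {a b t₀ : ℝ}
    (hf : Continuous (uncurry f)) (hf' : Continuous (uncurry f'))
    (hd : ∀ x t, HasDerivAt (f x) (f' x t) t) :
    HasDerivAt (fun t => ∫ x in a..b, f x t) (∫ x in a..b, f' x t₀) t₀ := by
  obtain ⟨C, hC⟩ : ∃ C, ∀ p ∈ uIcc a b ×ˢ Metric.closedBall t₀ 1, ‖f' p.1 p.2‖ ≤ C :=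
    (isCompact_uIcc.prod (isCompact_closedBall t₀ 1)).exists_bound_of_continuousOn
      hf'.continuousOn
  refine (intervalIntegral.hasDerivAt_integral_of_dominated_loc_of_deriv_le
    (F := fun t x => f x t) (bound := fun _ => C) (Metric.ball_mem_nhds t₀ one_pos)
    (.of_forall fun t => (hf.uncurry_right t).aestronglyMeasurable)
    ((hf.uncurry_right t₀).intervalIntegrable a b)
    (hf'.uncurry_right t₀).aestronglyMeasurable
    (.of_forall fun x hx t ht => hC (x, t) ⟨uIoc_subset_uIcc hx, Metric.ball_subset_closedBall ht⟩)
    intervalIntegrable_const (.of_forall fun x _ t _ => hd x t)).2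

theorem le_exp_mul_of_hasDerivAt_le {H H' : ℝ → ℝ} {K a b : ℝ}
    (hc : ContinuousOn H (Icc a b)) (hd : ∀ t ∈ Ioo a b, HasDerivAt H (H' t) t)
    (hle : ∀ t ∈ Ioo a b, H' t ≤ K * H t) :
    ∀ t ∈ Icc a b, H t ≤ exp (K * (t - a)) * H a := by
  set D : ℝ → ℝ := fun t => exp (-(K * (t - a))) * H t
  have hD : ∀ t ∈ Ioo a b,
      HasDerivAt D (exp (-(K * (t - a))) * (H' t - K * H t)) t := by
    intro t ht
    have hexp : HasDerivAt (fun t => exp (-(K * (t - a)))) (exp (-(K * (t - a))) * -K) t := by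
      simpa using ((((hasDerivAt_id t).sub_const a).const_mul K).neg).exp
    exact (hexp.mul (hd t ht)).congr_deriv (by ring)
  have hanti : AntitoneOn D (Icc a b) := by
    refine antitoneOn_of_deriv_nonpos (convex_Icc a b)
      (((Real.continuous_exp.comp (by fun_prop)).continuousOn).mul hc) ?_ ?_
    · rw [interior_Icc]
      exact fun t ht => (hD t ht).differentiableAt.differentiableWithinAt
    · rw [interior_Icc]
      intro t ht
      rw [(hD t ht).deriv]
      exact mul_nonpos_of_nonneg_of_nonpos (exp_pos _).le (by linarith [hle t ht])
  intro t ht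
  have h := hanti (left_mem_Icc.2 (ht.1.trans ht.2)) ht ht.1
  simp only [D, sub_self, mul_zero, neg_zero, exp_zero, one_mul] at h
  calc H t = exp (K * (t - a)) * D t := by simp only [D]; rw [← mul_assoc, ← exp_add]; simp
    _ ≤ exp (K * (t - a)) * H a := by gcongr

theorem le_exp_mul_add_integral_of_hasDerivAt_le {E E' G : ℝ → ℝ} {K a b : ℝ} (hK : 0 ≤ K)
    (hc : ContinuousOn E (Icc a b)) (hd : ∀ t ∈ Ioo a b, HasDerivAt E (E' t) t)
    (hG : Continuous G) (hG₀ : ∀ t, 0 ≤ G t) (hE₀ : 0 ≤ E a)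
    (hle : ∀ t ∈ Ioo a b, E' t ≤ K * E t + G t) :
    ∀ t ∈ Icc a b, E t ≤ exp (K * (b - a)) * (E a + ∫ s in a..b, G s) := by
  -- `E` plus the forcing still to come satisfies the unforced inequality
  set H : ℝ → ℝ := fun t => E t + ∫ s in t..b, G s
  have htail_nonneg {t : ℝ} (ht : t ≤ b) : 0 ≤ ∫ s in t..b, G s :=
    intervalIntegral.integral_nonneg ht fun s _ => hG₀ s
  have htail_deriv (t : ℝ) : HasDerivAt (fun t => ∫ s in t..b, G s) (-G t) t :=
    intervalIntegral.integral_hasDerivAt_left (hG.intervalIntegrable t b)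
      (hG.stronglyMeasurableAtFilter _ _) hG.continuousAt
  have hH : ∀ t ∈ Icc a b, H t ≤ exp (K * (t - a)) * H a :=
    le_exp_mul_of_hasDerivAt_le (H' := fun t => E' t - G t)
      (hc.add (continuous_iff_continuousAt.2 fun t => (htail_deriv t).continuousAt).continuousOn)
      (fun t ht => (hd t ht).add (htail_deriv t))
      fun t ht => by nlinarith [hle t ht, htail_nonneg ht.2.le]
  intro t ht
  have hHa : 0 ≤ H a := add_nonneg hE₀ (htail_nonneg (ht.1.trans ht.2))
  calc E t ≤ H t := le_add_of_nonneg_right (htail_nonneg ht.2)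
    _ ≤ exp (K * (t - a)) * H a := hH t ht
    _ ≤ exp (K * (b - a)) * H a := by gcongr; exact ht.2

noncomputable def waveEnergy (w : ℝ → ℝ → ℝ) (a b t : ℝ) : ℝ :=
  ∫ x in a..b, (pdt w x t ^ 2 + (w x t ^ 2 + pdx w x t ^ 2))

section WaveEnergy

variable {w : ℝ → ℝ → ℝ} {a b t : ℝ}

theorem waveEnergy_eq_add (hw : ContDiff ℝ 1 (uncurry w)) :
    waveEnergy w a b t =
      (∫ x in a..b, pdt w x t ^ 2) + ∫ x in a..b, (w x t ^ 2 + pdx w x t ^ 2) := by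
  have cw := hw.continuous
  have cwx := (hw.pdx (m := 0) le_rfl).continuous
  have cwt := (hw.pdt (m := 0) le_rfl).continuous
  exact intervalIntegral.integral_add (by apply Continuous.intervalIntegrable; fun_prop)
    (by apply Continuous.intervalIntegrable; fun_prop)

theorem waveEnergy_eq_of_eqOn {u u' v : ℝ → ℝ} (hw : ContDiff ℝ 1 (uncurry w)) (hab : a ≤ b)
    (h : ∀ x ∈ Ioo a b, pdt w x t = v x ∧ w x t = u x ∧ pdx w x t = u' x) :
    waveEnergy w a b t = (∫ x in a..b, v x ^ 2) + ∫ x in a..b, (u x ^ 2 + u' x ^ 2) := by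
  rw [waveEnergy_eq_add hw]
  congr 1 <;> refine intervalIntegral.integral_congr_Ioo_of_le hab fun x hx => ?_
  · simp only [(h x hx).1]
  · simp only [(h x hx).2.1, (h x hx).2.2]

theorem pdx_mul_pdt_eq_zero_of_neumann_or_dirichlet {T : ℝ}
    (hbc : (∀ t ∈ Icc 0 T, pdx w a t = 0 ∧ pdx w b t = 0) ∨
      (∀ t ∈ Icc 0 T, w a t = 0 ∧ w b t = 0)) :
    ∀ t ∈ Ioo 0 T, pdx w a t * pdt w a t = 0 ∧ pdx w b t * pdt w b t = 0 := by
  intro t ht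
  rcases hbc with hN | hD
  · simp [(hN t (Ioo_subset_Icc_self ht)).1, (hN t (Ioo_subset_Icc_self ht)).2]
  · simp [pdt_eq_zero_of_eqOn_Icc (fun s hs => (hD s hs).1) ht,
      pdt_eq_zero_of_eqOn_Icc (fun s hs => (hD s hs).2) ht]

theorem integral_pdx_mul_pdt_deriv_eq_sub (hw : ContDiff ℝ 2 (uncurry w)) :
    ∫ x in a..b, (pdx (pdx w) x t * pdt w x t + pdx w x t * pdx (pdt w) x t) =
      pdx w b t * pdt w b t - pdx w a t * pdt w a t := by
  have hwx := hw.pdx (m := 1) le_rfl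
  have hwt := hw.pdt (m := 1) le_rfl
  have hwxx := (hwx.pdx (m := 0) le_rfl).continuous
  have hwxt := (hwt.pdx (m := 0) le_rfl).continuous
  exact intervalIntegral.integral_deriv_mul_eq_sub
    (fun x _ => hasDerivAt_pdx (hwx.differentiable one_ne_zero _))
    (fun x _ => hasDerivAt_pdx (hwt.differentiable one_ne_zero _))
    ((hwxx.uncurry_right t).intervalIntegrable _ _) ((hwxt.uncurry_right t).intervalIntegrable _ _)

theorem hasDerivAt_waveEnergy (hw : ContDiff ℝ 2 (uncurry w)) (t : ℝ) :
    HasDerivAt (waveEnergy w a b)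
      ((∫ x in a..b, (2 * pdt w x t * (pdt (pdt w) x t - pdx (pdx w) x t) + 2 * w x t * pdt w x t))
        + 2 * (pdx w b t * pdt w b t - pdx w a t * pdt w a t)) t := by
  have hw₁ := hw.differentiable two_ne_zero
  have hwx := hw.pdx (m := 1) le_rfl
  have hwt := hw.pdt (m := 1) le_rfl
  have cw := hw.continuous
  have cwx := hwx.continuous
  have cwt := hwt.continuous
  have cwxx := (hwx.pdx (m := 0) le_rfl).continuous
  have cwxt := (hwt.pdx (m := 0) le_rfl).continuous
  have cwtt := (hwt.pdt (m := 0) le_rfl).continuous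
  have hd : ∀ x s, HasDerivAt (fun s => pdt w x s ^ 2 + (w x s ^ 2 + pdx w x s ^ 2))
      (2 * pdt w x s * pdt (pdt w) x s + (2 * w x s * pdt w x s
        + 2 * pdx w x s * pdx (pdt w) x s)) s := by
    intro x s
    rw [← pdt_pdx_comm hw]
    refine (((hasDerivAt_pdt (hwt.differentiable one_ne_zero _)).pow 2).add
      (((hasDerivAt_pdt (hw₁ _)).pow 2).add
        ((hasDerivAt_pdt (hwx.differentiable one_ne_zero _)).pow 2))).congr_deriv ?_
    push_cast
    ring
  refine (hasDerivAt_intervalIntegral_of_continuous (a := a) (b := b) (by fun_prop) (by fun_prop)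
    hd).congr_deriv ?_
  rw [← integral_pdx_mul_pdt_deriv_eq_sub hw, ← intervalIntegral.integral_const_mul,
    ← intervalIntegral.integral_add (by apply Continuous.intervalIntegrable; fun_prop)
      (by apply Continuous.intervalIntegrable; fun_prop)]
  congr 1 with x
  ring

theorem waveEnergy_le {f S : ℝ → ℝ → ℝ} {T : ℝ} (hab : a ≤ b) (hw : ContDiff ℝ 2 (uncurry w))
    (hf : Continuous (uncurry f)) (hS : ∀ x ∈ Ioo a b, ∀ t ∈ Ioo 0 T, |S x t| ≤ |w x t|)
    (hpde : ∀ x ∈ Ioo a b, ∀ t ∈ Ioo 0 T,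
      pdt (pdt w) x t - pdx (pdx w) x t + S x t = f x t)
    (hflux : ∀ t ∈ Ioo 0 T, pdx w a t * pdt w a t = 0 ∧ pdx w b t * pdt w b t = 0) :
    ∀ t ∈ Icc 0 T, waveEnergy w a b t ≤
      exp (3 * T) * (waveEnergy w a b 0 + ∫ s in 0..T, ∫ x in a..b, f x s ^ 2) := by
  have cw := hw.continuous
  have cwx := (hw.pdx (m := 1) le_rfl).continuous
  have cwt := (hw.pdt (m := 1) le_rfl).continuous
  have cwxx := ((hw.pdx (m := 1) le_rfl).pdx (m := 0) le_rfl).continuous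
  have cwtt := ((hw.pdt (m := 1) le_rfl).pdt (m := 0) le_rfl).continuous
  have hG : Continuous fun s => ∫ x in a..b, f x s ^ 2 :=
    intervalIntegral.continuous_parametric_intervalIntegral_of_continuous' (by fun_prop) a b
  have hle : ∀ t ∈ Ioo 0 T,
      (∫ x in a..b, (2 * pdt w x t * (pdt (pdt w) x t - pdx (pdx w) x t) + 2 * w x t * pdt w x t))
        + 2 * (pdx w b t * pdt w b t - pdx w a t * pdt w a t) ≤
      3 * waveEnergy w a b t + ∫ x in a..b, f x t ^ 2 := by
    intro t ht
    rw [(hflux t ht).1, (hflux t ht).2, sub_self, mul_zero, add_zero, waveEnergy,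
      ← intervalIntegral.integral_const_mul,
      ← intervalIntegral.integral_add (by apply Continuous.intervalIntegrable; fun_prop)
        (by apply Continuous.intervalIntegrable; fun_prop)]
    refine intervalIntegral.integral_mono_on_of_le_Ioo hab
      (by apply Continuous.intervalIntegrable; fun_prop)
      (by apply Continuous.intervalIntegrable; fun_prop) fun x hx => ?_
    have hSw : S x t ^ 2 ≤ w x t ^ 2 := sq_le_sq.2 (hS x hx t ht)
    rw [show pdt (pdt w) x t - pdx (pdx w) x t = f x t - S x t by linarith [hpde x hx t ht]]
    nlinarith [sq_nonneg (pdt w x t - f x t), sq_nonneg (pdt w x t + S x t),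
      sq_nonneg (w x t - pdt w x t), sq_nonneg (pdx w x t)]
  intro t ht
  simpa using le_exp_mul_add_integral_of_hasDerivAt_le (by norm_num)
    (fun t _ => (hasDerivAt_waveEnergy hw t).continuousAt.continuousWithinAt)
    (fun t _ => hasDerivAt_waveEnergy hw t) hG
    (fun s => intervalIntegral.integral_nonneg hab fun x _ => sq_nonneg _)
    (intervalIntegral.integral_nonneg hab fun x _ => by positivity) hle t ht

end WaveEnergy

theorem abs_inv_mul_sin_sub_sin_le {ε : ℝ} (hε : 0 < ε) (p y z : ℝ) :
    |ε⁻¹ * (sin (p + ε * y) - sin (p + ε * z))| ≤ |y - z| :=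
  calc |ε⁻¹ * (sin (p + ε * y) - sin (p + ε * z))|
      = ε⁻¹ * |sin (p + ε * y) - sin (p + ε * z)| := by rw [abs_mul, abs_of_pos (inv_pos.2 hε)]
    _ ≤ ε⁻¹ * |p + ε * y - (p + ε * z)| :=
      mul_le_mul_of_nonneg_left (abs_sin_sub_sin_le _ _) (inv_pos.2 hε).le
    _ = |y - z| := by
      rw [show p + ε * y - (p + ε * z) = ε * (y - z) by ring, abs_mul, abs_of_pos hε,
        inv_mul_cancel_left₀ hε.ne']

theorem continuous_dependence_general (T : ℝ) :
    ∃ c > 0, ∀ (L ε : ℝ) (φ g₁ g₂ η₁ η₂ : ℝ → ℝ → ℝ)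
      (u₀₁ u₀₂ v₀₁ v₀₂ : ℝ → ℝ),
      0 < L → 0 < ε → ε ≤ 1 →
      Continuous (Function.uncurry φ) →
      Continuous (Function.uncurry g₁) → Continuous (Function.uncurry g₂) →
      ContDiff ℝ 2 (Function.uncurry η₁) → ContDiff ℝ 2 (Function.uncurry η₂) →
      (∀ x ∈ Ioo (-L) L, ∀ t ∈ Ioo (0 : ℝ) T,
        pdt (pdt η₁) x t - pdx (pdx η₁) x t
          + ε⁻¹ * (Real.sin (φ x t + ε * η₁ x t) - Real.sin (φ x t)) = g₁ x t) →
      (∀ x ∈ Ioo (-L) L, ∀ t ∈ Ioo (0 : ℝ) T,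
        pdt (pdt η₂) x t - pdx (pdx η₂) x t
          + ε⁻¹ * (Real.sin (φ x t + ε * η₂ x t) - Real.sin (φ x t)) = g₂ x t) →
      ((∀ t ∈ Icc (0 : ℝ) T, (pdx η₁ (-L) t = 0 ∧ pdx η₁ L t = 0) ∧
                             (pdx η₂ (-L) t = 0 ∧ pdx η₂ L t = 0)) ∨
       (∀ t ∈ Icc (0 : ℝ) T, (η₁ (-L) t = 0 ∧ η₁ L t = 0) ∧
                             (η₂ (-L) t = 0 ∧ η₂ L t = 0))) →
      (∀ x ∈ Icc (-L) L, η₁ x 0 = u₀₁ x ∧ pdt η₁ x 0 = v₀₁ x) →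
      (∀ x ∈ Icc (-L) L, η₂ x 0 = u₀₂ x ∧ pdt η₂ x 0 = v₀₂ x) →
      ∀ t ∈ Icc (0 : ℝ) T,
        (∫ x in (-L)..L, (pdt η₂ x t - pdt η₁ x t) ^ 2)
            + (∫ x in (-L)..L,
                ((η₂ x t - η₁ x t) ^ 2 + (pdx η₂ x t - pdx η₁ x t) ^ 2)) ≤
          c * ((∫ x in (-L)..L, (v₀₂ x - v₀₁ x) ^ 2)
              + (∫ x in (-L)..L,
                  ((u₀₂ x - u₀₁ x) ^ 2 + (deriv u₀₂ x - deriv u₀₁ x) ^ 2))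
              + ∫ s in (0 : ℝ)..T, ∫ x in (-L)..L, (g₂ x s - g₁ x s) ^ 2) := by
  refine ⟨exp (3 * T), exp_pos _, ?_⟩
  intro L ε φ g₁ g₂ η₁ η₂ u₀₁ u₀₂ v₀₁ v₀₂ hL hε _ _ hg₁ hg₂ hη₁ hη₂ heq₁ heq₂ hbc hinit₁ hinit₂ t ht
  set w : ℝ → ℝ → ℝ := fun x t => η₂ x t - η₁ x t
  have hw : ContDiff ℝ 2 (uncurry w) := hη₂.sub hη₁
  have hwt : pdt w = fun x t => pdt η₂ x t - pdt η₁ x t :=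
    pdt_sub (hη₂.differentiable two_ne_zero) (hη₁.differentiable two_ne_zero)
  have hwx : pdx w = fun x t => pdx η₂ x t - pdx η₁ x t :=
    pdx_sub (hη₂.differentiable two_ne_zero) (hη₁.differentiable two_ne_zero)
  have hpde : ∀ x ∈ Ioo (-L) L, ∀ t ∈ Ioo 0 T, pdt (pdt w) x t - pdx (pdx w) x t
      + ε⁻¹ * (sin (φ x t + ε * η₂ x t) - sin (φ x t + ε * η₁ x t)) = g₂ x t - g₁ x t := by
    intro x hx t ht
    rw [pdt_pdt_sub hη₂ hη₁, pdx_pdx_sub hη₂ hη₁]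
    linear_combination heq₂ x hx t ht - heq₁ x hx t ht
  have hflux := pdx_mul_pdt_eq_zero_of_neumann_or_dirichlet (w := w) (a := -L) (b := L) (T := T) <|
    hbc.imp (fun h t ht => by simp [hwx, (h t ht).1, (h t ht).2])
      (fun h t ht => by simp [w, (h t ht).1, (h t ht).2])
  have hinit : ∀ x ∈ Ioo (-L) L, pdt w x 0 = v₀₂ x - v₀₁ x ∧ w x 0 = u₀₂ x - u₀₁ x ∧
      pdx w x 0 = deriv u₀₂ x - deriv u₀₁ x := by
    intro x hx
    have hx' := Icc_mem_nhds hx.1 hx.2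
    obtain ⟨hu₁, hv₁⟩ := hinit₁ x (Ioo_subset_Icc_self hx)
    obtain ⟨hu₂, hv₂⟩ := hinit₂ x (Ioo_subset_Icc_self hx)
    refine ⟨by simp only [hwt, hv₁, hv₂], by simp only [w, hu₁, hu₂], ?_⟩
    simp only [hwx, pdx_eq_deriv_of_eqOn (fun y hy => (hinit₁ y hy).1) hx',
      pdx_eq_deriv_of_eqOn (fun y hy => (hinit₂ y hy).1) hx']
  have hab : -L ≤ L := by linarith
  calc _ = waveEnergy w (-L) L t :=
        (waveEnergy_eq_of_eqOn (hw.of_le one_le_two) hab fun x _ => by simp [hwt, hwx, w]).symm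
    _ ≤ _ := waveEnergy_le (f := fun x t => g₂ x t - g₁ x t) hab hw (hg₂.sub hg₁)
          (fun x _ t _ => abs_inv_mul_sin_sub_sin_le hε _ _ _) hpde hflux t ht
    _ = _ := by rw [waveEnergy_eq_of_eqOn (hw.of_le one_le_two) hab hinit]

/-- Continuous dependence on data for the perturbation equation: for `T > 0` there is a
constant `c > 0` depending only on `T` such that for two `C²` solutions `η₁, η₂` of the
perturbation equation with forces `g₁, g₂`, boundary conditions of Neumann (or
Dirichlet) type, and initial data `(u₀ᵢ, v₀ᵢ)`, for all `t ∈ [0,T]` the difference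
satisfies the stated `H¹ × L²` estimate in terms of the differences of the data. -/
theorem continuous_dependence (T : ℝ) (hT : 0 < T) :
    ∃ c > 0, ∀ (L ε : ℝ) (φ g₁ g₂ η₁ η₂ : ℝ → ℝ → ℝ)
      (u₀₁ u₀₂ v₀₁ v₀₂ : ℝ → ℝ),
      0 < L → 0 < ε → ε ≤ 1 →
      Continuous (Function.uncurry φ) →
      Continuous (Function.uncurry g₁) → Continuous (Function.uncurry g₂) →
      ContDiff ℝ 2 (Function.uncurry η₁) → ContDiff ℝ 2 (Function.uncurry η₂) →
      (∀ x ∈ Ioo (-L) L, ∀ t ∈ Ioo (0 : ℝ) T,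
        pdt (pdt η₁) x t - pdx (pdx η₁) x t
          + ε⁻¹ * (Real.sin (φ x t + ε * η₁ x t) - Real.sin (φ x t)) = g₁ x t) →
      (∀ x ∈ Ioo (-L) L, ∀ t ∈ Ioo (0 : ℝ) T,
        pdt (pdt η₂) x t - pdx (pdx η₂) x t
          + ε⁻¹ * (Real.sin (φ x t + ε * η₂ x t) - Real.sin (φ x t)) = g₂ x t) →
      ((∀ t ∈ Icc (0 : ℝ) T, (pdx η₁ (-L) t = 0 ∧ pdx η₁ L t = 0) ∧
                             (pdx η₂ (-L) t = 0 ∧ pdx η₂ L t = 0)) ∨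
       (∀ t ∈ Icc (0 : ℝ) T, (η₁ (-L) t = 0 ∧ η₁ L t = 0) ∧
                             (η₂ (-L) t = 0 ∧ η₂ L t = 0))) →
      (∀ x ∈ Icc (-L) L, η₁ x 0 = u₀₁ x ∧ pdt η₁ x 0 = v₀₁ x) →
      (∀ x ∈ Icc (-L) L, η₂ x 0 = u₀₂ x ∧ pdt η₂ x 0 = v₀₂ x) →
      ∀ t ∈ Icc (0 : ℝ) T,
        (∫ x in (-L)..L, (pdt η₂ x t - pdt η₁ x t) ^ 2)
            + (∫ x in (-L)..L,
                ((η₂ x t - η₁ x t) ^ 2 + (pdx η₂ x t - pdx η₁ x t) ^ 2)) ≤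
          c * ((∫ x in (-L)..L, (v₀₂ x - v₀₁ x) ^ 2)
              + (∫ x in (-L)..L,
                  ((u₀₂ x - u₀₁ x) ^ 2 + (deriv u₀₂ x - deriv u₀₁ x) ^ 2))
              + ∫ s in (0 : ℝ)..T, ∫ x in (-L)..L, (g₂ x s - g₁ x s) ^ 2) :=
  continuous_dependence_general T
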